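/- arXiv:1808.08654 — 5 statements merged into one kernel-verified Lean document; each statement's English description precedes it below -/
import Mathlib

section
/- For 0 < σ < 1, ε = (1-σ)^{1/n}, and n ≥ 3, the limit as σ ↑ 1 of (1-σ) ∫_0^ε ∫_ξ^ε r^{1-n-σ} ξ^{n-2} dr dξ equals 1/(n-1). -/
/-!
Integrating first in `r`, then in `ξ`, gives the closed form
`(1 - σ) I(σ) = ε ^ (1 - σ) / (n - 1) = (1 - σ) ^ ((1 - σ) / n) / (n - 1)`,
and `x ^ (x / n) → 1` as `x → 0⁺` because `x log x → 0`.
-/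

open MeasureTheory Real Filter Set Topology Interval

theorem integral_integral_rpow_mul_rpow {ε p m : ℝ} (hε : 0 ≤ ε) (hp : p ≠ -1) (hm : -1 < m)
    (hpm : 0 < p + m + 2) :
    ∫ ξ in (0 : ℝ)..ε, ∫ r in ξ..ε, r ^ p * ξ ^ m = ε ^ (p + m + 2) / ((m + 1) * (p + m + 2)) := by
  have inner : ∀ ξ ∈ Ι (0 : ℝ) ε,
      ∫ r in ξ..ε, r ^ p * ξ ^ m = (ε ^ (p + 1) * ξ ^ m - ξ ^ (p + m + 1)) / (p + 1) := by
    intro ξ hξ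
    rw [uIoc_of_le hε] at hξ
    have h0 : (0 : ℝ) ∉ [[ξ, ε]] := by
      rw [uIcc_of_le hξ.2]; exact fun h => h.1.not_gt hξ.1
    rw [intervalIntegral.integral_mul_const, integral_rpow (Or.inr ⟨hp, h0⟩), div_mul_eq_mul_div,
      sub_mul, ← rpow_add hξ.1, show p + 1 + m = p + m + 1 by ring]
  have hp1 : p + 1 ≠ 0 := fun h => hp (by linarith)
  have hm1 : m + 1 ≠ 0 := by linarith
  have hpm' : p + m + 2 ≠ 0 := hpm.ne'
  rw [intervalIntegral.integral_congr_ae (Eventually.of_forall inner),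
    intervalIntegral.integral_div,
    intervalIntegral.integral_sub ((intervalIntegral.intervalIntegrable_rpow' hm).const_mul _)
      (intervalIntegral.intervalIntegrable_rpow' (by linarith)),
    intervalIntegral.integral_const_mul, integral_rpow (Or.inl hm),
    integral_rpow (Or.inl (by linarith)), zero_rpow (by linarith), zero_rpow (by linarith),
    sub_zero, sub_zero, mul_div_assoc', ← rpow_add' hε (by linarith),
    show p + 1 + (m + 1) = p + m + 2 by ring, show p + m + 1 + 1 = p + m + 2 by ring]
  field_simp
  ring

theorem tendsto_rpow_mul_self_nhdsGT_zero (c : ℝ) :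
    Tendsto (fun x : ℝ => x ^ (c * x)) (𝓝[>] 0) (𝓝 1) := by
  have hexp : Tendsto (fun x => exp (c * (log x * x))) (𝓝[>] 0) (𝓝 1) := by
    have h := (tendsto_log_mul_rpow_nhdsGT_zero one_pos).const_mul c
    simp only [rpow_one, mul_zero] at h
    simpa [Function.comp_def] using (continuous_exp.tendsto 0).comp h
  refine hexp.congr' (eventually_mem_nhdsWithin.mono fun x (hx : 0 < x) => ?_)
  beta_reduce
  rw [rpow_def_of_pos hx, mul_left_comm]

theorem tendsto_sub_nhdsLT (a : ℝ) : Tendsto (fun x => a - x) (𝓝[<] a) (𝓝[>] 0) := by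
  refine tendsto_nhdsWithin_iff.2
    ⟨?_, eventually_mem_nhdsWithin.mono fun x hx => mem_Ioi.2 (sub_pos.2 hx)⟩
  simpa using ((tendsto_const_nhds (x := a)).sub tendsto_id).mono_left
    (nhdsWithin_le_nhds (a := a) (s := Iio a))

theorem stmt3 (n : ℕ) (hn : 3 ≤ n) :
    Filter.Tendsto
      (fun σ : ℝ => (1 - σ) *
        ∫ ξ in (0 : ℝ)..((1 - σ) ^ ((1 : ℝ) / n)),
          ∫ r in ξ..((1 - σ) ^ ((1 : ℝ) / n)),
            r ^ ((1 : ℝ) - n - σ) * ξ ^ ((n : ℝ) - 2))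
      (nhdsWithin 1 (Set.Iio 1)) (nhds (1 / ((n : ℝ) - 1))) := by
  have hn3 : (3 : ℝ) ≤ n := by exact_mod_cast hn
  have closed_form : ∀ᶠ σ in 𝓝[<] (1 : ℝ), (1 - σ) ^ ((1 : ℝ) / n * (1 - σ)) / ((n : ℝ) - 1) =
      (1 - σ) * ∫ ξ in (0 : ℝ)..((1 - σ) ^ ((1 : ℝ) / n)),
        ∫ r in ξ..((1 - σ) ^ ((1 : ℝ) / n)), r ^ ((1 : ℝ) - n - σ) * ξ ^ ((n : ℝ) - 2) := by
    filter_upwards [Ioo_mem_nhdsLT (show (0 : ℝ) < 1 by norm_num)] with σ ⟨hσ0, hσ1⟩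
    have hσ : 0 < 1 - σ := sub_pos.2 hσ1
    rw [integral_integral_rpow_mul_rpow (rpow_nonneg hσ.le _) (by linarith) (by linarith)
      (by linarith), ← rpow_mul hσ.le, show (1 : ℝ) - n - σ + (n - 2) + 2 = 1 - σ by ring]
    field_simp
    ring_nf
  simpa using (((tendsto_rpow_mul_self_nhdsGT_zero (1 / n)).comp (tendsto_sub_nhdsLT 1)).div_const
    ((n : ℝ) - 1)).congr' closed_form
end

section
/- Let C be a compact C¹ one-dimensional submanifold of ℝ^n. If a closed (n-1)-dimensional disc D̄(p,u,r) intersects C in infinitely many points, then there exists z ∈ D̄(p,u,r) ∩ C at which the tangent vector t(z) of C satisfies t(z)·u = 0. -/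
open Set Filter Topology

/-!
The parameters `s` with `γ s` in the closed disc form an infinite compact set, so they accumulate
at some `s₀` of the set itself. The function `s ↦ ⟪γ s - p, u⟫` vanishes on this set, so its
derivative `⟪γ' s₀, u⟫` at the accumulation point `s₀` is zero.
-/

theorem Set.Infinite.exists_accPt_inter_preimage {X Y : Type*} [TopologicalSpace X]
    [TopologicalSpace Y] {γ : X → Y} (hγ : Continuous γ) {K : Set X} (hK : IsCompact K)
    {D : Set Y} (hD : IsClosed D) (hinf : (D ∩ γ '' K).Infinite) :
    ∃ s ∈ K ∩ γ ⁻¹' D, AccPt s (𝓟 (K ∩ γ ⁻¹' D)) := by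
  rw [inter_comm, ← image_inter_preimage] at hinf
  exact (hinf.of_image γ).exists_accPt_of_subset_isCompact (hK.inter_right (hD.preimage hγ))
    subset_rfl

theorem exists_inner_deriv_eq_zero_of_infinite_inter_image {E : Type*} [NormedAddCommGroup E]
    [InnerProductSpace ℝ E] {γ : ℝ → E} (hγ : Differentiable ℝ γ) {K : Set ℝ} (hK : IsCompact K)
    {D : Set E} (hD : IsClosed D) {p u : E} (hDu : ∀ x ∈ D, inner ℝ (x - p) u = 0)
    (hinf : (D ∩ γ '' K).Infinite) :
    ∃ s ∈ K, γ s ∈ D ∧ inner ℝ (deriv γ s) u = 0 := by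
  obtain ⟨s, ⟨hsK, hsD⟩, hacc⟩ := hinf.exists_accPt_inter_preimage hγ.continuous hK hD
  have hderiv : HasDerivAt (fun t ↦ inner ℝ (γ t - p) u) (inner ℝ (deriv γ s) u) s := by
    simpa using ((hγ s).hasDerivAt.sub_const p).inner ℝ (hasDerivAt_const s u)
  have hzero : deriv (fun t ↦ inner ℝ (γ t - p) u) s = 0 :=
    deriv_zero_of_frequently_const (c := 0) <|
      (accPt_iff_frequently_nhdsNE.mp hacc).mono fun t ht ↦ hDu _ ht.2
  exact ⟨s, hsK, hsD, hderiv.deriv ▸ hzero⟩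

theorem stmt7_general (n : ℕ)
    (γ : ℝ → EuclideanSpace ℝ (Fin n))
    (hγ : ContDiff ℝ 1 γ)
    (p u : EuclideanSpace ℝ (Fin n)) (r : ℝ)
    (hinf : ({x | (inner ℝ (x - p) u : ℝ) = 0 ∧ ‖x - p‖ ≤ r} ∩
      γ '' Set.Icc 0 1).Infinite) :
    ∃ s ∈ Set.Icc (0 : ℝ) 1,
      (inner ℝ (γ s - p) u : ℝ) = 0 ∧ ‖γ s - p‖ ≤ r ∧ (inner ℝ (deriv γ s) u : ℝ) = 0 := by
  have hdisc : IsClosed {x | (inner ℝ (x - p) u : ℝ) = 0 ∧ ‖x - p‖ ≤ r} := by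
    rw [ofPred_and]
    exact (isClosed_eq (by fun_prop) continuous_const).inter
      (isClosed_le (by fun_prop) continuous_const)
  obtain ⟨s, hs, ⟨hplane, hball⟩, htangent⟩ :=
    exists_inner_deriv_eq_zero_of_infinite_inter_image (hγ.differentiable one_ne_zero)
      isCompact_Icc hdisc (fun _ hx ↦ hx.1) hinf
  exact ⟨s, hs, hplane, hball, htangent⟩

theorem stmt7 (n : ℕ) (hn : 2 < n)
    (γ : ℝ → EuclideanSpace ℝ (Fin n))
    (hγ : ContDiff ℝ 1 γ)
    (hinj : Set.InjOn γ (Set.Icc 0 1))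
    (hreg : ∀ s ∈ Set.Icc (0 : ℝ) 1, deriv γ s ≠ 0)
    (p u : EuclideanSpace ℝ (Fin n)) (hu : ‖u‖ = 1) (r : ℝ) (hr : 0 < r)
    (hinf : ({x | (inner ℝ (x - p) u : ℝ) = 0 ∧ ‖x - p‖ ≤ r} ∩
      γ '' Set.Icc 0 1).Infinite) :
    ∃ s ∈ Set.Icc (0 : ℝ) 1,
      (inner ℝ (γ s - p) u : ℝ) = 0 ∧ ‖γ s - p‖ ≤ r ∧ (inner ℝ (deriv γ s) u : ℝ) = 0 :=
  stmt7_general n γ hγ p u r hinf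
end

section
/- Let C be a compact C¹ curve in ℝ^n (n > 2). The set 𝒟_{∂2} of discs (p,u,r) not tangent to C whose boundary sphere ∂D(p,u,r) meets C in at least two points has (2n-1)-dimensional Hausdorff measure zero. -/
/-!
Encode a disc whose boundary circle passes through two distinct curve points `γ s₁`, `γ s₂` by
`(s₁, s₂, u, q)`, where `u` is its unit normal and `q` the offset of its centre from the midpoint
of the chord. These parameters satisfy four equations whose derivative is already surjective in
the `(u, q)`-directions as soon as the chord is nondegenerate, so by the implicit function theorem
they form a set of Hausdorff dimension at most `(2 + 2n) - 4 = 2n - 2`. The discs are a locally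
Lipschitz image of that set, hence are `ℋ^{2n-1}`-null.
-/

open Set Filter Topology MeasureTheory Module RealInnerProductSpace

theorem LocallyLipschitz.dimH_image_le {X Y : Type*} [EMetricSpace X] [EMetricSpace Y]
    [SecondCountableTopology X] {f : X → Y} (hf : LocallyLipschitz f) (s : Set X) :
    dimH (f '' s) ≤ dimH s :=
  dimH_image_le_of_locally_lipschitzOn fun x _ ↦
    let ⟨K, t, ht, hK⟩ := hf x
    ⟨K, t, nhdsWithin_le_nhds ht, hK⟩

theorem dimH_le_finrank_sub_finrank_of_subset_fiber
    {E F : Type*} [NormedAddCommGroup E] [NormedSpace ℝ E] [FiniteDimensional ℝ E]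
    [NormedAddCommGroup F] [NormedSpace ℝ F] [FiniteDimensional ℝ F]
    {f : E → F} {s : Set E} {c : F} (hs : s ⊆ f ⁻¹' {c})
    (hf : ∀ x ∈ s, ∃ f' : E →L[ℝ] F, HasStrictFDerivAt f f' x ∧ f'.range = ⊤) :
    dimH s ≤ (finrank ℝ E - finrank ℝ F : ℕ) := by
  by_contra! hlt
  obtain ⟨x, hx, hxs⟩ := exists_mem_nhdsWithin_lt_dimH_of_lt_dimH hlt
  obtain ⟨f', hf', hsurj⟩ := hf x hx
  set φ := hf'.implicitToOpenPartialHomeomorph f f' hsurj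
  set g := hf'.implicitFunction f f' hsurj
  obtain ⟨K, t, ht, hK⟩ := (hf'.to_implicitFunction hsurj).exists_lipschitzOnWith
  have hφ : ContinuousAt (fun y ↦ (φ y).2) x :=
    continuous_snd.continuousAt.comp
      (φ.continuousAt (hf'.mem_implicitToOpenPartialHomeomorph_source hsurj))
  have hV : {y | (φ y).2 ∈ t ∧ g (f y) (φ y).2 = y} ∈ 𝓝 x := by
    refine inter_mem (hφ.preimage_mem_nhds ?_) (hf'.eq_implicitFunction hsurj)
    simpa [φ] using ht
  -- near `x` the fiber through `x` is parametrised by `ker f'` via the implicit function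
  have hsub : s ∩ {y | (φ y).2 ∈ t ∧ g (f y) (φ y).2 = y} ⊆ g (f x) '' t := by
    rintro y ⟨hys, hyt, hy⟩
    refine ⟨_, hyt, ?_⟩
    rwa [show f x = f y by rw [hs hx, hs hys]]
  have hker : finrank ℝ f'.ker = finrank ℝ E - finrank ℝ F := by
    rw [← f'.toLinearMap.finrank_range_add_finrank_ker, hsurj, finrank_top]
    omega
  refine (hxs _ (inter_mem_nhdsWithin s hV)).not_ge ?_
  calc dimH _ ≤ dimH (g (f x) '' t) := dimH_mono hsub
    _ ≤ dimH t := hK.dimH_image_le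
    _ ≤ dimH (univ : Set f'.ker) := dimH_mono (subset_univ _)
    _ = _ := by rw [Real.dimH_univ_eq_finrank, hker]

section Chords

variable {E : Type*} [NormedAddCommGroup E] [InnerProductSpace ℝ E] {γ : ℝ → E}

/-- For `x = (s₁, s₂, u, q)`, `chordEquations γ x = (1, 0, 0, 0)` says exactly that `u` is a unit
vector and that `γ s₁`, `γ s₂` lie on the boundary circle of the disc `chordDisc γ x`, which has
normal `u` and centre `midpoint ℝ (γ s₁) (γ s₂) + q`. -/
def chordEquations (γ : ℝ → E) (x : ℝ × ℝ × E × E) : ℝ × ℝ × ℝ × ℝ :=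
  (⟪x.2.2.1, x.2.2.1⟫, ⟪γ x.1 - γ x.2.1, x.2.2.1⟫, ⟪x.2.2.2, x.2.2.1⟫,
    ⟪x.2.2.2, γ x.1 - γ x.2.1⟫)

def chordConfigurations (γ : ℝ → E) : Set (ℝ × ℝ × E × E) :=
  {x | chordEquations γ x = (1, 0, 0, 0) ∧ γ x.1 ≠ γ x.2.1}

noncomputable def chordDisc (γ : ℝ → E) (x : ℝ × ℝ × E × E) : E × E × ℝ :=
  (midpoint ℝ (γ x.1) (γ x.2.1) + x.2.2.2, x.2.2.1,
    ‖γ x.1 - (midpoint ℝ (γ x.1) (γ x.2.1) + x.2.2.2)‖)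

theorem exists_hasStrictFDerivAt_chordEquations_range_eq_top (hγ : ContDiff ℝ 1 γ)
    {x : ℝ × ℝ × E × E} (hx : x ∈ chordConfigurations γ) :
    ∃ f' : (ℝ × ℝ × E × E) →L[ℝ] ℝ × ℝ × ℝ × ℝ,
      HasStrictFDerivAt (chordEquations γ) f' x ∧ f'.range = ⊤ := by
  obtain ⟨s₁, s₂, u, q⟩ := x
  obtain ⟨hx, hne⟩ := hx
  simp only [chordEquations, Prod.mk.injEq] at hx hne
  obtain ⟨huu, hwu, hqu, hqw⟩ := hx
  have hγ' (s : ℝ) : HasStrictFDerivAt γ (fderiv ℝ γ s) s :=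
    hγ.contDiffAt.hasStrictFDerivAt one_ne_zero
  have hid := hasStrictFDerivAt_id (𝕜 := ℝ) (s₁, s₂, u, q)
  have hw := ((hγ' s₁).comp _ hid.fst).sub ((hγ' s₂).comp _ hid.snd.fst)
  have hu := hid.snd.snd.fst
  have hq := hid.snd.snd.snd
  refine ⟨_, (hu.inner ℝ hu).prodMk ((hw.inner ℝ hu).prodMk ((hq.inner ℝ hu).prodMk
    (hq.inner ℝ hw))), ?_⟩
  have huw : ⟪u, γ s₁ - γ s₂⟫ = 0 := by rw [real_inner_comm, hwu]
  have hu1 : ‖u‖ ^ 2 = 1 := by rw [← real_inner_self_eq_norm_sq, huu]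
  have hw0 : ‖γ s₁ - γ s₂‖ ^ 2 ≠ 0 := by simpa [sub_eq_zero] using hne
  rw [LinearMap.range_eq_top]
  rintro ⟨y₁, y₂, y₃, y₄⟩
  -- `u ⊥ γ s₁ - γ s₂`, so the derivative sends `(0, 0, u / 2, 0)`, `(0, 0, w / ‖w‖², 0)`,
  -- `(0, 0, 0, u)`, `(0, 0, 0, w / ‖w‖²)` (with `w = γ s₁ - γ s₂`) to the standard basis
  refine ⟨(0, 0, (y₁ / 2) • u + (y₂ / ‖γ s₁ - γ s₂‖ ^ 2) • (γ s₁ - γ s₂),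
    y₃ • u + (y₄ / ‖γ s₁ - γ s₂‖ ^ 2) • (γ s₁ - γ s₂)), ?_⟩
  simp [fderivInnerCLM_apply, inner_add_left, inner_add_right, inner_smul_left, inner_smul_right,
    hwu, huw, hqu, hqw, hu1, hw0]

theorem dimH_chordConfigurations_le [FiniteDimensional ℝ E] (hγ : ContDiff ℝ 1 γ) :
    dimH (chordConfigurations γ) ≤ (2 * finrank ℝ E - 2 : ℕ) := by
  refine (dimH_le_finrank_sub_finrank_of_subset_fiber (c := ((1, 0, 0, 0) : ℝ × ℝ × ℝ × ℝ))
    (fun x hx ↦ hx.1) fun x hx ↦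
      exists_hasStrictFDerivAt_chordEquations_range_eq_top hγ hx).trans_eq ?_
  simp only [finrank_prod, finrank_self]
  congr 1
  omega

theorem locallyLipschitz_chordDisc (hγ : ContDiff ℝ 1 γ) : LocallyLipschitz (chordDisc γ) := by
  have hc : ContDiff ℝ 1 fun x : ℝ × ℝ × E × E ↦ midpoint ℝ (γ x.1) (γ x.2.1) + x.2.2.2 := by
    simp only [midpoint_eq_smul_add]
    fun_prop
  have hu : ContDiff ℝ 1 fun x : ℝ × ℝ × E × E ↦ x.2.2.1 := by fun_prop
  exact hc.locallyLipschitz.prodMk (hu.locallyLipschitz.prodMk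
    (lipschitzWith_one_norm.locallyLipschitz.comp ((hγ.comp contDiff_fst).sub hc).locallyLipschitz))

theorem hausdorffMeasure_chordDisc_image_eq_zero [FiniteDimensional ℝ E] [MeasurableSpace E]
    [BorelSpace E] (hγ : ContDiff ℝ 1 γ)
    {d : ℝ} (hd : ((2 * finrank ℝ E - 2 : ℕ) : ℝ) < d) :
    μH[d] (chordDisc γ '' chordConfigurations γ) = 0 := by
  lift d to NNReal using (Nat.cast_nonneg _).trans hd.le
  refine hausdorffMeasure_of_dimH_lt <| calc
    _ ≤ dimH (chordConfigurations γ) := (locallyLipschitz_chordDisc hγ).dimH_image_le _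
    _ ≤ (2 * finrank ℝ E - 2 : ℕ) := dimH_chordConfigurations_le hγ
    _ < d := mod_cast hd

theorem mem_chordDisc_image {p u : E} {r s₁ s₂ : ℝ} (hu : ‖u‖ = 1) (hne : γ s₁ ≠ γ s₂)
    (h₁ : ⟪γ s₁ - p, u⟫ = 0) (hr₁ : ‖γ s₁ - p‖ = r)
    (h₂ : ⟪γ s₂ - p, u⟫ = 0) (hr₂ : ‖γ s₂ - p‖ = r) :
    (p, u, r) ∈ chordDisc γ '' chordConfigurations γ := by
  refine ⟨(s₁, s₂, u, p - midpoint ℝ (γ s₁) (γ s₂)), ⟨?_, hne⟩, by simp [chordDisc, hr₁]⟩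
  have hw : γ s₁ - γ s₂ = (γ s₁ - p) - (γ s₂ - p) := by abel
  have hq : p - midpoint ℝ (γ s₁) (γ s₂) = -(2⁻¹ : ℝ) • ((γ s₁ - p) + (γ s₂ - p)) := by
    rw [midpoint_eq_smul_add, invOf_eq_inv]; module
  rw [chordEquations, hw, hq]
  generalize γ s₁ - p = a at *
  generalize γ s₂ - p = b at *
  simp only [Prod.mk.injEq, inner_sub_left, inner_add_left, inner_sub_right,
    real_inner_smul_left, h₁, h₂, real_inner_self_eq_norm_sq, hu, hr₁, hr₂, real_inner_comm a b]
  exact ⟨one_pow 2, sub_zero 0, by simp, by ring⟩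

end Chords

theorem stmt9_general (n : ℕ) (hn : 2 < n)
    (γ : ℝ → EuclideanSpace ℝ (Fin n))
    (hγ : ContDiff ℝ 1 γ) :
    μH[2 * (n : ℝ) - 1]
      {x : EuclideanSpace ℝ (Fin n) × EuclideanSpace ℝ (Fin n) × ℝ |
        ‖x.2.1‖ = 1 ∧ 0 < x.2.2 ∧
        -- the disc is not tangent to the curve
        ¬ (∃ s ∈ Set.Icc (0 : ℝ) 1,
            (inner ℝ (γ s - x.1) x.2.1 : ℝ) = 0 ∧ ‖γ s - x.1‖ ≤ x.2.2 ∧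
            (inner ℝ (deriv γ s) x.2.1 : ℝ) = 0) ∧
        -- the boundary sphere of the disc meets the curve in at least two points
        ∃ s₁ ∈ Set.Icc (0 : ℝ) 1, ∃ s₂ ∈ Set.Icc (0 : ℝ) 1,
          γ s₁ ≠ γ s₂ ∧
          (inner ℝ (γ s₁ - x.1) x.2.1 : ℝ) = 0 ∧ ‖γ s₁ - x.1‖ = x.2.2 ∧
          (inner ℝ (γ s₂ - x.1) x.2.1 : ℝ) = 0 ∧ ‖γ s₂ - x.1‖ = x.2.2} = 0 := by
  refine measure_mono_null ?_ (hausdorffMeasure_chordDisc_image_eq_zero hγ ?_)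
  · rintro ⟨p, u, r⟩ ⟨hu, -, -, s₁, -, s₂, -, hne, h₁, hr₁, h₂, hr₂⟩
    exact mem_chordDisc_image hu hne h₁ hr₁ h₂ hr₂
  · rw [finrank_euclideanSpace_fin, Nat.cast_sub (by omega)]
    push_cast
    linarith

theorem stmt9 (n : ℕ) (hn : 2 < n)
    (γ : ℝ → EuclideanSpace ℝ (Fin n))
    (hγ : ContDiff ℝ 1 γ)
    (hinj : Set.InjOn γ (Set.Icc 0 1))
    (hreg : ∀ s ∈ Set.Icc (0 : ℝ) 1, deriv γ s ≠ 0) :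
    μH[2 * (n : ℝ) - 1]
      {x : EuclideanSpace ℝ (Fin n) × EuclideanSpace ℝ (Fin n) × ℝ |
        ‖x.2.1‖ = 1 ∧ 0 < x.2.2 ∧
        -- the disc is not tangent to the curve
        ¬ (∃ s ∈ Set.Icc (0 : ℝ) 1,
            (inner ℝ (γ s - x.1) x.2.1 : ℝ) = 0 ∧ ‖γ s - x.1‖ ≤ x.2.2 ∧
            (inner ℝ (deriv γ s) x.2.1 : ℝ) = 0) ∧
        -- the boundary sphere of the disc meets the curve in at least two points
        ∃ s₁ ∈ Set.Icc (0 : ℝ) 1, ∃ s₂ ∈ Set.Icc (0 : ℝ) 1,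
          γ s₁ ≠ γ s₂ ∧
          (inner ℝ (γ s₁ - x.1) x.2.1 : ℝ) = 0 ∧ ‖γ s₁ - x.1‖ = x.2.2 ∧
          (inner ℝ (γ s₂ - x.1) x.2.1 : ℝ) = 0 ∧ ‖γ s₂ - x.1‖ = x.2.2} = 0 :=
  stmt9_general n hn γ hγ
end

section
/- For a bounded open set E ⊆ ℝ^n with smooth boundary and n ≥ 2, the set of pairs (x,y) ∈ ℝ^n × ℝ^n for which the open segment from x to y crosses ∂E an odd number of times coincides, up to a set of ℒ^{2n}-measure zero, with (E × E^c) ∪ (E^c × E). -/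
open MeasureTheory Set Module Function Topology Filter
open scoped ENNReal NNReal symmDiff

lemma haar_null_of_dimH_lt {E : Type*} [NormedAddCommGroup E] [NormedSpace ℝ E]
    [FiniteDimensional ℝ E] [MeasurableSpace E] [BorelSpace E]
    (μ : Measure E) [SigmaFinite μ] [μ.IsAddHaarMeasure] {s : Set E}
    (h : dimH s < (finrank ℝ E : ℝ≥0∞)) : μ s = 0 := by
  have hac : μ ≪ μH[(finrank ℝ E : ℝ≥0)] := by
    have : μ ≪ (μH[(finrank ℝ E : ℝ)] : Measure E) :=
      Measure.absolutelyContinuous_isAddHaarMeasure μ _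
    simpa using this
  exact measure_zero_of_dimH_lt hac (by exact_mod_cast h)

lemma dimH_levelSet_le {E F : Type*} [NormedAddCommGroup E] [NormedSpace ℝ E]
    [FiniteDimensional ℝ E] [NormedAddCommGroup F] [NormedSpace ℝ F] [FiniteDimensional ℝ F]
    {f : E → F} (hf : ContDiff ℝ 1 f) {S : Set E}
    (hS : ∀ z ∈ S, f z = 0)
    (hreg : ∀ z ∈ S, Function.Surjective (fderiv ℝ f z)) :
    dimH S ≤ ((finrank ℝ E - finrank ℝ F : ℕ) : ℝ≥0∞) := by
  by_contra hcon
  push_neg at hcon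
  obtain ⟨a, haS, ha⟩ := exists_mem_nhdsWithin_lt_dimH_of_lt_dimH hcon
  -- construct a local chart near `a`
  set f' : E →L[ℝ] F := fderiv ℝ f a with hf'def
  have hsurj : Function.Surjective f' := hreg a haS
  set K := LinearMap.ker (f' : E →ₗ[ℝ] F) with hK
  obtain ⟨proj, hproj⟩ := Submodule.ClosedComplemented.of_finiteDimensional K
  -- the chart map
  set g : E → F × K := fun z => (f z, proj z) with hg
  have hstrictf : HasStrictFDerivAt f f' a := hf.contDiffAt.hasStrictFDerivAt one_ne_zero
  set g' : E →L[ℝ] F × K := f'.prod proj with hg'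
  have hbij : Function.Bijective g' := by
    constructor
    · intro u v huv
      have h1 : f' u = f' v := congrArg Prod.fst huv
      have h2 : proj u = proj v := congrArg Prod.snd huv
      have hu : u - v ∈ K := by simp [hK, LinearMap.mem_ker, map_sub, h1]
      have : proj (u - v) = ⟨u - v, hu⟩ := hproj ⟨u - v, hu⟩
      have : (proj (u - v) : E) = u - v := by rw [this]
      rw [map_sub, h2, sub_self] at this
      exact sub_eq_zero.mp (by simpa using this.symm)
    · rintro ⟨u, k⟩
      obtain ⟨w, hw⟩ := hsurj u
      refine ⟨w - (proj w : E) + (k : E), ?_⟩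
      have h1 : f' ((proj w : E)) = 0 := (proj w).2
      have h2 : f' (k : E) = 0 := k.2
      have h3 : proj ((proj w : E)) = proj w := hproj (proj w)
      have h4 : proj (k : E) = k := hproj k
      simp [hg', ContinuousLinearMap.prod_apply, map_add, map_sub, h1, h2, h3, h4, hw]
  set e : E ≃L[ℝ] F × K := LinearEquiv.toContinuousLinearEquiv (LinearEquiv.ofBijective
    (g' : E →ₗ[ℝ] F × K) hbij) with he
  have hecoe : (e : E →L[ℝ] F × K) = g' := by ext z <;> rfl
  have hstrictg : HasStrictFDerivAt g (e : E →L[ℝ] F × K) a := by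
    rw [hecoe]
    exact hstrictf.prodMk proj.hasStrictFDerivAt
  -- local inverse is Lipschitz near g a
  have hinv := hstrictg.to_localInverse (f := g)
  obtain ⟨C, V, hV, hlip⟩ := hinv.exists_lipschitzOnWith
  -- the set where localInverse is a left inverse
  have hleft := hstrictg.eventually_left_inverse (f := g)
  obtain ⟨W₀, hW₀, hW₀left⟩ := Filter.eventually_iff_exists_mem.1 hleft
  set li := hstrictg.localInverse g (e : E ≃L[ℝ] F × K) a with hli
  -- t is a neighborhood of a within S with small dimH
  have hgc : ContinuousAt g a := hstrictg.continuousAt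
  set t := S ∩ (W₀ ∩ g ⁻¹' V) with ht
  have htmem : t ∈ 𝓝[S] a := by
    apply inter_mem_nhdsWithin
    exact Filter.inter_mem hW₀ (hgc.preimage_mem_nhds hV)
  refine absurd (ha t htmem) (not_lt.2 ?_)
  have hsub : t ⊆ li '' (V ∩ ({0} ×ˢ (univ : Set K))) := by
    rintro z ⟨hzS, hzW, hzV⟩
    refine ⟨g z, ⟨hzV, ?_⟩, hW₀left z hzW⟩
    constructor
    · simp [hg, hS z hzS]
    · exact mem_univ _
  calc dimH t ≤ dimH (li '' (V ∩ ({0} ×ˢ (univ : Set K)))) := dimH_mono hsub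
    _ ≤ dimH (V ∩ ({0} ×ˢ (univ : Set K))) :=
        (hlip.mono inter_subset_left).dimH_image_le
    _ ≤ dimH ({0} ×ˢ (univ : Set K)) := dimH_mono inter_subset_right
    _ ≤ ((finrank ℝ E - finrank ℝ F : ℕ) : ℝ≥0∞) := by
        have hiso : Isometry (fun k : K => ((0 : F), k)) := by
          intro k k'
          simp [Prod.edist_eq]
        have himg : {(0 : F)} ×ˢ (univ : Set K) = (fun k : K => ((0 : F), k)) '' univ := by
          ext p
          simp [Set.mem_prod, eq_comm, Prod.ext_iff]
        rw [himg, hiso.dimH_image]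
        rw [Real.dimH_univ_eq_finrank]
        have hrank : finrank ℝ K = finrank ℝ E - finrank ℝ F := by
          have h1 := LinearMap.finrank_range_add_finrank_ker (f' : E →ₗ[ℝ] F)
          have h2 : finrank ℝ (LinearMap.range (f' : E →ₗ[ℝ] F)) = finrank ℝ F := by
            rw [(LinearMap.range_eq_top (f := (f' : E →ₗ[ℝ] F))).2 hsurj]; exact finrank_top ℝ F
          have hkk : finrank ℝ (LinearMap.ker (f' : E →ₗ[ℝ] F)) = finrank ℝ K := rfl
          omega
        rw [hrank]

lemma sign_transfer {g : ℝ → ℝ} (hc : Continuous g) {a b : ℝ} (hab : a ≤ b)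
    (h : ∀ t ∈ Ioo a b, g t ≠ 0) (ha : 0 < g a) (hb : g b ≠ 0) : 0 < g b := by
  by_contra hb'
  have hb2 : g b < 0 := lt_of_le_of_ne (not_lt.1 hb') hb
  obtain ⟨t, ht, hgt⟩ := intermediate_value_Ioo' hab hc.continuousOn (show (0:ℝ) ∈ Ioo (g b) (g a) from ⟨hb2, ha⟩)
  exact h t ht hgt

lemma zeros_finite {g g' : ℝ → ℝ} (hg : ∀ s, HasDerivAt g (g' s) s) {a b : ℝ}
    (ha : g a ≠ 0) (hb : g b ≠ 0)
    (hreg : ∀ s ∈ Ioo a b, g s = 0 → g' s ≠ 0) :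
    {s | s ∈ Ioo a b ∧ g s = 0}.Finite := by
  by_contra hinf
  rw [← Set.not_infinite, not_not] at hinf
  set Z := {s | s ∈ Ioo a b ∧ g s = 0} with hZ
  have hZsub : Z ⊆ Icc a b := fun z hz => ⟨hz.1.1.le, hz.1.2.le⟩
  obtain ⟨x, hxK, hacc⟩ := hinf.exists_accPt_of_subset_isCompact isCompact_Icc hZsub
  have hcont : Continuous g := (Differentiable.continuous fun s => (hg s).differentiableAt)
  -- x is a zero of g
  have hxcl : x ∈ closure Z := mem_closure_iff_clusterPt.2 hacc.clusterPt
  have hgx : g x = 0 := by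
    have hclosed : IsClosed {s : ℝ | g s = 0} := isClosed_eq hcont continuous_const
    exact hclosed.closure_subset ((closure_mono (fun z hz => hz.2 : Z ⊆ {s | g s = 0})) hxcl)
  have hxab : x ∈ Ioo a b := by
    rcases hxK.1.lt_or_eq with h | h
    · rcases hxK.2.lt_or_eq with h' | h'
      · exact ⟨h, h'⟩
      · exact absurd (h' ▸ hgx) hb
    · exact absurd (h ▸ hgx) ha
  -- derivative at x is 0
  have hnb : (𝓝[≠] x ⊓ 𝓟 Z).NeBot := hacc
  have hs1 : Tendsto (slope g x) (𝓝[≠] x ⊓ 𝓟 Z) (𝓝 (g' x)) :=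
    (hasDerivAt_iff_tendsto_slope.1 (hg x)).mono_left inf_le_left
  have hs2 : Tendsto (slope g x) (𝓝[≠] x ⊓ 𝓟 Z) (𝓝 0) := by
    apply tendsto_const_nhds.congr'
    filter_upwards [mem_inf_of_right (mem_principal_self Z)] with z hz
    simp [slope, hz.2, hgx]
  exact hreg x hxab hgx (tendsto_nhds_unique hs1 hs2)

lemma parity_step {g g' : ℝ → ℝ} (hg : ∀ s, HasDerivAt g (g' s) s) {a b s₁ : ℝ}
    (hab : a < b) (ha : g a ≠ 0) (hb : g b ≠ 0)
    (hZfin : {s | s ∈ Ioo a b ∧ g s = 0}.Finite)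
    (hs₁Z : s₁ ∈ {s | s ∈ Ioo a b ∧ g s = 0})
    (hs₁min : ∀ z ∈ {s | s ∈ Ioo a b ∧ g s = 0}, s₁ ≤ z)
    (hder : 0 < g' s₁) :
    g a < 0 ∧ ∃ b' ∈ Ioo s₁ b, 0 < g b' ∧
      {s | s ∈ Ioo b' b ∧ g s = 0} = {s | s ∈ Ioo a b ∧ g s = 0} \ {s₁} := by
  set Z := {s | s ∈ Ioo a b ∧ g s = 0} with hZdef
  obtain ⟨⟨has₁, hs₁b⟩, hgs₁⟩ := hs₁Z
  have hcont : Continuous g := Differentiable.continuous fun s => (hg s).differentiableAt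
  -- positive slope near s₁
  have hslope : Tendsto (slope g s₁) (𝓝[≠] s₁) (𝓝 (g' s₁)) :=
    hasDerivAt_iff_tendsto_slope.1 (hg s₁)
  have hev : ∀ᶠ t in 𝓝[≠] s₁, 0 < slope g s₁ t := hslope.eventually (eventually_gt_nhds hder)
  rw [eventually_nhdsWithin_iff] at hev
  obtain ⟨δ, hδpos, hδ⟩ := Metric.eventually_nhds_iff.1 hev
  have hslope_pos : ∀ t, dist t s₁ < δ → t ≠ s₁ → 0 < (g t) / (t - s₁) := by
    intro t h1 h2
    have := hδ h1 h2
    rw [slope_def_field] at this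
    rwa [hgs₁, sub_zero] at this
  -- no zeros strictly before s₁
  have hnoz : ∀ t ∈ Ioo a s₁, g t ≠ 0 := by
    intro t ht hgt
    have htZ : t ∈ Z := ⟨⟨ht.1, ht.2.trans hs₁b⟩, hgt⟩
    exact absurd (hs₁min t htZ) (not_le.2 ht.2)
  -- sign just left of s₁ is negative
  set tL := max (s₁ - δ/2) ((a + s₁)/2) with htL
  have htL1 : a < tL := lt_max_of_lt_right (by linarith)
  have htL2 : tL < s₁ := max_lt (by linarith) (by linarith)
  have htLd : dist tL s₁ < δ := by
    rw [Real.dist_eq, abs_of_nonpos (by linarith)]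
    have : s₁ - δ/2 ≤ tL := le_max_left _ _
    linarith
  have hgtL : g tL < 0 := by
    have hsl := hslope_pos tL htLd htL2.ne
    by_contra hge
    push_neg at hge
    have : g tL / (tL - s₁) ≤ 0 := div_nonpos_of_nonneg_of_nonpos hge (by linarith)
    linarith
  have hga : g a < 0 := by
    rcases lt_or_gt_of_ne ha with h | h
    · exact h
    · exact absurd (sign_transfer hcont htL1.le
        (fun t ht => hnoz t ⟨ht.1, ht.2.trans htL2⟩) h hgtL.ne) (not_lt.2 hgtL.le)
  refine ⟨hga, ?_⟩
  -- choose b' below all other zeros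
  set Z' := Z \ {s₁} with hZ'def
  obtain ⟨m, hmmem, hmmin⟩ := Set.exists_min_image (insert b Z') id
    ((hZfin.diff).insert b) ⟨b, mem_insert _ _⟩
  have hs₁m : s₁ < m := by
    rcases hmmem with h | h
    · rw [h]; exact hs₁b
    · rcases lt_or_eq_of_le (hs₁min m h.1) with h' | h'
      · exact h'
      · exact absurd h'.symm h.2
  set B := min (s₁ + δ) m with hBdef
  have hs₁B : s₁ < B := lt_min (by linarith) hs₁m
  set b' := (s₁ + B) / 2 with hb'def
  have hb'1 : s₁ < b' := by
    simp only [hb'def]; linarith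
  have hb'B : b' < B := by simp only [hb'def]; linarith
  have hmb : m ≤ b := hmmin b (mem_insert _ _)
  have hb'b : b' < b := lt_of_lt_of_le (hb'B.trans_le (min_le_right _ _)) hmb
  have hb'd : dist b' s₁ < δ := by
    rw [Real.dist_eq, abs_of_nonneg (by linarith)]
    have : B ≤ s₁ + δ := min_le_left _ _
    linarith
  have hgb' : 0 < g b' := by
    have hsl := hslope_pos b' hb'd hb'1.ne'
    by_contra hge
    push_neg at hge
    have : g b' / (b' - s₁) ≤ 0 := div_nonpos_of_nonpos_of_nonneg hge (by linarith)
    linarith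
  refine ⟨b', ⟨hb'1, hb'b⟩, hgb', ?_⟩
  ext z
  constructor
  · rintro ⟨⟨hz1, hz2⟩, hz3⟩
    have hzZ : z ∈ Z := ⟨⟨lt_trans (lt_trans has₁ hb'1) hz1, hz2⟩, hz3⟩
    exact ⟨hzZ, fun h => absurd (mem_singleton_iff.1 h ▸ hz1) (not_lt.2 hb'1.le)⟩
  · rintro ⟨hzZ, hzne⟩
    have hzm : m ≤ z := hmmin z (mem_insert_of_mem _ ⟨hzZ, hzne⟩)
    have : b' < z := lt_of_lt_of_le (hb'B.trans_le (min_le_right _ _)) hzm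
    exact ⟨⟨this, hzZ.1.2⟩, hzZ.2⟩


lemma mul_neg_iff_of_neg {x y : ℝ} (h : x < 0) (hy : y ≠ 0) : x * y < 0 ↔ 0 < y := by
  rw [mul_neg_iff]
  constructor
  · rintro (⟨h1, _⟩ | ⟨_, h2⟩)
    · exact absurd h1 (not_lt.2 h.le)
    · exact h2
  · intro hy0; exact Or.inr ⟨h, hy0⟩

lemma mul_neg_iff_of_pos {x y : ℝ} (h : 0 < x) (hy : y ≠ 0) : x * y < 0 ↔ y < 0 := by
  rw [mul_neg_iff]
  constructor
  · rintro (⟨_, h2⟩ | ⟨h1, _⟩)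
    · exact h2
    · exact absurd h1 (not_lt.2 h.le)
  · intro hy0; exact Or.inl ⟨h, hy0⟩

lemma parity_core : ∀ (k : ℕ) (g g' : ℝ → ℝ), (∀ s, HasDerivAt g (g' s) s) →
    ∀ (a b : ℝ), a < b → g a ≠ 0 → g b ≠ 0 →
    (∀ s ∈ Ioo a b, g s = 0 → g' s ≠ 0) →
    {s | s ∈ Ioo a b ∧ g s = 0}.ncard = k →
    (Odd k ↔ g a * g b < 0) := by
  intro k
  induction k with
  | zero =>
    intro g g' hg a b hab ha hb hreg hcard
    have hZfin := zeros_finite hg ha hb hreg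
    have hZempty : {s | s ∈ Ioo a b ∧ g s = 0} = ∅ := (Set.ncard_eq_zero hZfin).1 hcard
    have hnoz : ∀ t ∈ Ioo a b, g t ≠ 0 := fun t ht h =>
      (eq_empty_iff_forall_notMem.1 hZempty t) ⟨ht, h⟩
    have hcont : Continuous g := Differentiable.continuous fun s => (hg s).differentiableAt
    simp only [Nat.odd_iff, Nat.zero_mod]
    constructor
    · intro h; exact absurd h (by norm_num)
    · intro h
      exfalso
      rcases mul_neg_iff.1 h with ⟨h1, h2⟩ | ⟨h1, h2⟩
      · exact absurd (sign_transfer hcont hab.le hnoz h1 hb) (not_lt.2 h2.le)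
      · have := sign_transfer hcont.neg hab.le
          (fun t ht h' => hnoz t ht (neg_eq_zero.1 h')) (by show (0:ℝ) < -g a; linarith)
          (neg_ne_zero.2 hb)
        have h3 : (0:ℝ) < -g b := this
        linarith
  | succ k ih =>
    intro g g' hg a b hab ha hb hreg hcard
    have hZfin := zeros_finite hg ha hb hreg
    have hne : {s | s ∈ Ioo a b ∧ g s = 0}.Nonempty :=
      Set.nonempty_of_ncard_ne_zero (by rw [hcard]; exact k.succ_ne_zero)
    obtain ⟨s₁, hs₁Z, hs₁min⟩ := Set.exists_min_image _ id hZfin hne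
    have hder0 : g' s₁ ≠ 0 := hreg s₁ hs₁Z.1 hs₁Z.2
    have hcard' : ({s | s ∈ Ioo a b ∧ g s = 0} \ {s₁}).ncard = k := by
      rw [Set.ncard_diff_singleton_of_mem hs₁Z, hcard]
      omega
    rw [Nat.odd_add_one]
    rcases lt_or_gt_of_ne hder0 with hneg | hpos
    · -- negative derivative at first zero: work with -g
      have hgneg : ∀ s, HasDerivAt (fun t => -g t) (-g' s) s := fun s => (hg s).neg
      have hZeq : {s | s ∈ Ioo a b ∧ -g s = 0} = {s | s ∈ Ioo a b ∧ g s = 0} := by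
        ext t; simp [neg_eq_zero]
      obtain ⟨hga, b', hb'mem, hgb', hzeq⟩ := parity_step (g := fun t => -g t) (g' := fun t => -g' t)
        hgneg hab (neg_ne_zero.2 ha) (neg_ne_zero.2 hb)
        (by rw [show {s | s ∈ Ioo a b ∧ -g s = 0} = {s | s ∈ Ioo a b ∧ g s = 0} from hZeq]; exact hZfin)
        (⟨hs₁Z.1, by show -g s₁ = 0; rw [hs₁Z.2, neg_zero]⟩)
        (by intro z hz; exact hs₁min z (by rw [← hZeq]; exact hz))
        (by simpa using hneg)
      have hga' : 0 < g a := by linarith [show -g a < 0 from hga]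
      have hgb'' : g b' < 0 := by linarith [show (0:ℝ) < -g b' from hgb']
      have hzeq' : {s | s ∈ Ioo b' b ∧ g s = 0} = {s | s ∈ Ioo a b ∧ g s = 0} \ {s₁} := by
        rw [← hZeq, ← hzeq]; ext t; simp [neg_eq_zero]
      have hih := ih g g' hg b' b hb'mem.2 (by linarith) hb
        (fun s hs => hreg s ⟨lt_trans (lt_trans hs₁Z.1.1 hb'mem.1) hs.1, hs.2⟩)
        (by rw [hzeq']; exact hcard')
      rw [hih, mul_neg_iff_of_neg hgb'' hb, mul_neg_iff_of_pos hga' hb]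
      constructor
      · intro h; rcases lt_or_gt_of_ne hb with h' | h'
        · exact h'
        · exact absurd h' h
      · intro h; exact not_lt.2 h.le
    · obtain ⟨hga, b', hb'mem, hgb', hzeq⟩ := parity_step hg hab ha hb hZfin hs₁Z
        (fun z hz => hs₁min z hz) hpos
      have hih := ih g g' hg b' b hb'mem.2 hgb'.ne' hb
        (fun s hs => hreg s ⟨lt_trans (lt_trans hs₁Z.1.1 hb'mem.1) hs.1, hs.2⟩)
        (by rw [hzeq]; exact hcard')
      rw [hih, mul_neg_iff_of_pos hgb' hb, mul_neg_iff_of_neg hga hb]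
      constructor
      · intro h; rcases lt_or_gt_of_ne hb with h' | h'
        · exact absurd h' h
        · exact h'
      · intro h; exact not_lt.2 h.le

lemma clm_surj_of_ne_zero {E : Type*} [NormedAddCommGroup E] [NormedSpace ℝ E]
    {L : E →L[ℝ] ℝ} (h : L ≠ 0) : Function.Surjective L := by
  obtain ⟨v, hv⟩ : ∃ v, L v ≠ 0 := by
    by_contra hc; push_neg at hc; exact h (ContinuousLinearMap.ext fun v => by simp [hc v])
  intro c
  refine ⟨(c / L v) • v, ?_⟩
  rw [ContinuousLinearMap.map_smul, smul_eq_mul]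
  field_simp

lemma seg_eq {X : Type*} [NormedAddCommGroup X] [NormedSpace ℝ X] (x y : X) (s : ℝ) :
    (1 - s) • x + s • y = x + s • (y - x) := by
  rw [sub_smul, one_smul, smul_sub]; abel

lemma psi_surj {X : Type*} [NormedAddCommGroup X] [NormedSpace ℝ X]
    {F : X → ℝ} (hF : ContDiff ℝ (⊤ : ℕ∞) F)
    (hΨ : ContDiff ℝ 1 (fun w : X × X × ℝ => (F w.1, fderiv ℝ F w.1 (w.1 - w.2.1))))
    (w : X × X × ℝ) (hDp : fderiv ℝ F w.1 ≠ 0) :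
    Function.Surjective
      (fderiv ℝ (fun w : X × X × ℝ => (F w.1, fderiv ℝ F w.1 (w.1 - w.2.1))) w) := by
  obtain ⟨p, xx, ss⟩ := w
  set Ψ : X × X × ℝ → ℝ × ℝ := fun w => (F w.1, fderiv ℝ F w.1 (w.1 - w.2.1)) with hΨdef
  set L := fderiv ℝ Ψ (p, xx, ss) with hLdef
  have hL : HasFDerivAt Ψ L (p, xx, ss) := (hΨ.differentiable one_ne_zero (p, xx, ss)).hasFDerivAt
  have hc : ∀ v : X × X × ℝ, HasDerivAt (fun t : ℝ => (p, xx, ss) + t • v) v 0 := by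
    intro v
    simpa using ((hasDerivAt_id (0 : ℝ)).smul_const v).const_add (p, xx, ss)
  have hcomp : ∀ v : X × X × ℝ, HasDerivAt (fun t : ℝ => Ψ ((p, xx, ss) + t • v)) (L v) 0 := by
    intro v
    have hL' : HasFDerivAt Ψ L ((p, xx, ss) + (0 : ℝ) • v) := by simpa using hL
    simpa [Function.comp_def] using hL'.comp_hasDerivAt 0 (hc v)
  -- value of L on (0, δx, 0)
  have hv2 : ∀ δx : X, L ((0 : X), δx, (0 : ℝ)) = (0, -(fderiv ℝ F p δx)) := by
    intro δx
    have heq : (fun t : ℝ => Ψ ((p, xx, ss) + t • ((0 : X), δx, (0 : ℝ)))) =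
        fun t => (F p, fderiv ℝ F p (p - xx) - t * fderiv ℝ F p δx) := by
      funext t
      have h1 : (p, xx, ss) + t • ((0 : X), δx, (0 : ℝ)) = (p, xx + t • δx, ss) := by
        simp [Prod.ext_iff]
      rw [h1]
      show (F p, fderiv ℝ F p (p - (xx + t • δx))) = _
      congr 1
      rw [show p - (xx + t • δx) = (p - xx) - t • δx by abel, map_sub,
        ContinuousLinearMap.map_smul, smul_eq_mul]
    have hR : HasDerivAt (fun t : ℝ => (F p, fderiv ℝ F p (p - xx) - t * fderiv ℝ F p δx))
        ((0 : ℝ), -(fderiv ℝ F p δx)) 0 :=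
      (hasDerivAt_const 0 (F p)).prodMk
        ((hasDerivAt_mul_const (fderiv ℝ F p δx)).const_sub _)
    exact HasDerivAt.unique (heq ▸ hcomp ((0 : X), δx, (0 : ℝ))) hR
  -- first component of L on (δp, 0, 0)
  have hv1 : ∀ δp : X, (L (δp, (0 : X), (0 : ℝ))).1 = fderiv ℝ F p δp := by
    intro δp
    have hfst : HasDerivAt (fun t : ℝ => (Ψ ((p, xx, ss) + t • (δp, (0 : X), (0 : ℝ)))).1)
        ((L (δp, (0 : X), (0 : ℝ))).1) 0 := by
      have := (ContinuousLinearMap.fst ℝ ℝ ℝ).hasFDerivAt.comp_hasDerivAt 0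
        (hcomp (δp, (0 : X), (0 : ℝ)))
      simpa [Function.comp_def] using this
    have heq1 : (fun t : ℝ => (Ψ ((p, xx, ss) + t • (δp, (0 : X), (0 : ℝ)))).1) =
        fun t => F (p + t • δp) := by
      funext t
      have h1 : (p, xx, ss) + t • (δp, (0 : X), (0 : ℝ)) = (p + t • δp, xx, ss) := by
        simp [Prod.ext_iff]
      rw [h1]
    have hc2 : HasDerivAt (fun t : ℝ => p + t • δp) δp 0 := by
      simpa using ((hasDerivAt_id (0 : ℝ)).smul_const δp).const_add p
    have hd : HasFDerivAt F (fderiv ℝ F p) (p + (0 : ℝ) • δp) := by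
      simpa using ((hF.differentiable (by simp)) p).hasFDerivAt
    have hdir : HasDerivAt (fun t : ℝ => F (p + t • δp)) (fderiv ℝ F p δp) 0 :=
      hd.comp_hasDerivAt 0 hc2
    exact HasDerivAt.unique (heq1 ▸ hfst) hdir
  -- surjectivity
  rintro ⟨aa, bb⟩
  obtain ⟨v, hv⟩ : ∃ v, fderiv ℝ F p v ≠ 0 := by
    by_contra hcc; push_neg at hcc
    exact hDp (ContinuousLinearMap.ext fun v => by simpa using hcc v)
  set u := (aa / fderiv ℝ F p v) • v with hu
  have hu1 : fderiv ℝ F p u = aa := by rw [hu, ContinuousLinearMap.map_smul, smul_eq_mul]; field_simp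
  set c₀ := (L (u, (0 : X), (0 : ℝ))).2 with hc₀
  set δx := ((c₀ - bb) / fderiv ℝ F p v) • v with hδx
  have hδx1 : fderiv ℝ F p δx = c₀ - bb := by rw [hδx, ContinuousLinearMap.map_smul, smul_eq_mul]; field_simp
  refine ⟨(u, δx, (0 : ℝ)), ?_⟩
  have hsplit : (u, δx, (0 : ℝ)) = (u, (0 : X), (0 : ℝ)) + ((0 : X), δx, (0 : ℝ)) := by
    simp [Prod.ext_iff]
  rw [hsplit, map_add]
  have h1 : L (u, (0 : X), (0 : ℝ)) = (aa, c₀) := by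
    exact Prod.ext (by rw [hv1 u, hu1]) rfl
  rw [h1, hv2 δx, hδx1]
  ext <;> simp

theorem stmt17 (n : ℕ) (hn : 2 ≤ n) (A : Set (EuclideanSpace ℝ (Fin n)))
    (hAo : IsOpen A) (hAb : Bornology.IsBounded A)
    -- `A` has smooth boundary: it is a regular sublevel set of a smooth function
    (F : EuclideanSpace ℝ (Fin n) → ℝ) (hF : ContDiff ℝ (⊤ : ℕ∞) F)
    (hAF : A = {x | F x < 0}) (hbd : frontier A = {x | F x = 0})
    (hregF : ∀ x ∈ frontier A, fderiv ℝ F x ≠ 0) :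
    volume
      (({q : EuclideanSpace ℝ (Fin n) × EuclideanSpace ℝ (Fin n) |
          {s : ℝ | s ∈ Ioo (0 : ℝ) 1 ∧ (1 - s) • q.1 + s • q.2 ∈ frontier A}.Finite ∧
          Odd {s : ℝ | s ∈ Ioo (0 : ℝ) 1 ∧ (1 - s) • q.1 + s • q.2 ∈ frontier A}.ncard}
        ∆ ((A ×ˢ Aᶜ) ∪ (Aᶜ ×ˢ A)))) = 0 := by
  have hFd : Differentiable ℝ F := hF.differentiable (by simp)
  -- the frontier is a null set
  have hfr : volume (frontier A) = 0 := by
    have hdim : dimH (frontier A) ≤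
        ((finrank ℝ (EuclideanSpace ℝ (Fin n)) - finrank ℝ ℝ : ℕ) : ℝ≥0∞) := by
      refine dimH_levelSet_le (hF.of_le (by simp)) ?_ ?_
      · intro z hz; rw [hbd] at hz; exact hz
      · intro z hz; rw [hbd] at hz
        exact clm_surj_of_ne_zero (hregF z (by rw [hbd]; exact hz))
    refine haar_null_of_dimH_lt volume (lt_of_le_of_lt hdim ?_)
    rw [finrank_euclideanSpace_fin, Module.finrank_self]
    exact_mod_cast Nat.sub_lt (by omega) (by omega)
  have hN₁0 : volume ((frontier A ×ˢ (univ : Set (EuclideanSpace ℝ (Fin n)))) ∪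
      ((univ : Set (EuclideanSpace ℝ (Fin n))) ×ˢ frontier A)) = 0 := by
    refine measure_union_null ?_ ?_
    · rw [Measure.volume_eq_prod, Measure.prod_prod, hfr, zero_mul]
    · rw [Measure.volume_eq_prod, Measure.prod_prod, hfr, mul_zero]
  -- the tangency set N₂ is a null set
  have hN₂0 : volume {q : EuclideanSpace ℝ (Fin n) × EuclideanSpace ℝ (Fin n) |
      ∃ s ∈ Ioo (0:ℝ) 1, F ((1 - s) • q.1 + s • q.2) = 0 ∧
        fderiv ℝ F ((1 - s) • q.1 + s • q.2) (q.2 - q.1) = 0} = 0 := by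
    have hdF : ContDiff ℝ 1 (fderiv ℝ F) := hF.fderiv_right (by exact WithTop.coe_le_coe.2 le_top)
    have hΨc : ContDiff ℝ 1 (fun w : EuclideanSpace ℝ (Fin n) × EuclideanSpace ℝ (Fin n) × ℝ =>
        (F w.1, fderiv ℝ F w.1 (w.1 - w.2.1))) := by
      have h1 : ContDiff ℝ 1 (fun w : EuclideanSpace ℝ (Fin n) × EuclideanSpace ℝ (Fin n) × ℝ =>
          F w.1) := (hF.of_le (by simp)).comp contDiff_fst
      have h2 : ContDiff ℝ 1 (fun w : EuclideanSpace ℝ (Fin n) × EuclideanSpace ℝ (Fin n) × ℝ =>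
          fderiv ℝ F w.1) := hdF.comp contDiff_fst
      have h3 : ContDiff ℝ 1 (fun w : EuclideanSpace ℝ (Fin n) × EuclideanSpace ℝ (Fin n) × ℝ =>
          w.1 - w.2.1) := contDiff_fst.sub (contDiff_fst.comp contDiff_snd)
      have h4 : ContDiff ℝ 1 (fun w : EuclideanSpace ℝ (Fin n) × EuclideanSpace ℝ (Fin n) × ℝ =>
          fderiv ℝ F w.1 (w.1 - w.2.1)) :=
        by simpa [Function.comp_def] using isBoundedBilinearMap_apply.contDiff.comp (h2.prodMk h3)
      exact h1.prodMk h4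
    have hdimS : dimH {w : EuclideanSpace ℝ (Fin n) × EuclideanSpace ℝ (Fin n) × ℝ |
        (F w.1, fderiv ℝ F w.1 (w.1 - w.2.1)) = (0 : ℝ × ℝ)} ≤
        ((finrank ℝ (EuclideanSpace ℝ (Fin n) × EuclideanSpace ℝ (Fin n) × ℝ)
          - finrank ℝ (ℝ × ℝ) : ℕ) : ℝ≥0∞) := by
      refine dimH_levelSet_le hΨc (fun z hz => hz) ?_
      intro z hz
      have hFz : F z.1 = 0 := by
        have := (Prod.ext_iff.1 hz).1
        simpa using this
      exact psi_surj hF hΨc z (hregF z.1 (by rw [hbd]; exact hFz))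
    have hrankW : (finrank ℝ (EuclideanSpace ℝ (Fin n) × EuclideanSpace ℝ (Fin n) × ℝ)
        - finrank ℝ (ℝ × ℝ) : ℕ) = 2 * n - 1 := by
      rw [Module.finrank_prod, Module.finrank_prod, Module.finrank_prod,
        finrank_euclideanSpace_fin, Module.finrank_self]
      omega
    rw [hrankW] at hdimS
    -- cover N₂ by Lipschitz images of the tangency manifold
    have hcover : {q : EuclideanSpace ℝ (Fin n) × EuclideanSpace ℝ (Fin n) |
        ∃ s ∈ Ioo (0:ℝ) 1, F ((1 - s) • q.1 + s • q.2) = 0 ∧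
          fderiv ℝ F ((1 - s) • q.1 + s • q.2) (q.2 - q.1) = 0} ⊆
        ⋃ (k : ℕ), (fun w : EuclideanSpace ℝ (Fin n) × EuclideanSpace ℝ (Fin n) × ℝ =>
            (w.2.1, w.2.1 + (w.2.2)⁻¹ • (w.1 - w.2.1))) ''
          ({w | (F w.1, fderiv ℝ F w.1 (w.1 - w.2.1)) = (0 : ℝ × ℝ)} ∩
            {w | ((k : ℝ) + 1)⁻¹ < w.2.2}) := by
      rintro ⟨x, y⟩ ⟨s, hs, hF0, htan⟩
      obtain ⟨k, hk⟩ := exists_nat_one_div_lt hs.1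
      have hpx : ((1 - s) • x + s • y) - x = s • (y - x) := by
        rw [seg_eq, add_sub_cancel_left]
      refine mem_iUnion.2 ⟨k, ⟨((1 - s) • x + s • y, x, s), ⟨?_, ?_⟩, ?_⟩⟩
      · show ((F ((1 - s) • x + s • y)), _) = ((0 : ℝ), (0 : ℝ))
        refine Prod.ext hF0 ?_
        show fderiv ℝ F ((1 - s) • x + s • y) (((1 - s) • x + s • y) - x) = 0
        rw [hpx, ContinuousLinearMap.map_smul, htan, smul_zero]
      · show ((k : ℝ) + 1)⁻¹ < s
        rw [one_div] at hk; exact hk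
      · show (x, x + s⁻¹ • (((1 - s) • x + s • y) - x)) = (x, y)
        refine Prod.ext rfl ?_
        rw [hpx, smul_smul, inv_mul_cancel₀ hs.1.ne', one_smul]
        show x + (y - x) = y
        abel
    have hdimN₂ : dimH {q : EuclideanSpace ℝ (Fin n) × EuclideanSpace ℝ (Fin n) |
        ∃ s ∈ Ioo (0:ℝ) 1, F ((1 - s) • q.1 + s • q.2) = 0 ∧
          fderiv ℝ F ((1 - s) • q.1 + s • q.2) (q.2 - q.1) = 0} ≤ ((2 * n - 1 : ℕ) : ℝ≥0∞) := by
      refine le_trans (dimH_mono hcover) ?_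
      rw [dimH_iUnion]
      refine iSup_le fun k => ?_
      have hD : Convex ℝ {w : EuclideanSpace ℝ (Fin n) × EuclideanSpace ℝ (Fin n) × ℝ |
          ((k : ℝ) + 1)⁻¹ < w.2.2} := by
        have hlin : IsLinearMap ℝ
            (fun w : EuclideanSpace ℝ (Fin n) × EuclideanSpace ℝ (Fin n) × ℝ => w.2.2) :=
          ⟨fun a b => rfl, fun c a => rfl⟩
        exact convex_halfSpace_gt hlin _
      have hΦD : ContDiffOn ℝ 1
          (fun w : EuclideanSpace ℝ (Fin n) × EuclideanSpace ℝ (Fin n) × ℝ =>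
            (w.2.1, w.2.1 + (w.2.2)⁻¹ • (w.1 - w.2.1)))
          {w | ((k : ℝ) + 1)⁻¹ < w.2.2} := by
        refine ContDiffOn.prodMk ((contDiff_fst.comp contDiff_snd).contDiffOn) ?_
        refine ContDiffOn.add ((contDiff_fst.comp contDiff_snd).contDiffOn) ?_
        refine ContDiffOn.smul (𝕜' := ℝ) ?_ (((contDiff_fst.sub (contDiff_fst.comp contDiff_snd) : ContDiff ℝ 1
          (fun w : EuclideanSpace ℝ (Fin n) × EuclideanSpace ℝ (Fin n) × ℝ => w.1 - w.2.1))).contDiffOn)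
        refine ContDiffOn.inv ((contDiff_snd.comp contDiff_snd).contDiffOn) ?_
        intro w hw
        have h0 : (0:ℝ) < ((k : ℝ) + 1)⁻¹ := by positivity
        exact (h0.trans hw).ne'
      calc dimH _ ≤ dimH ({w : EuclideanSpace ℝ (Fin n) × EuclideanSpace ℝ (Fin n) × ℝ |
              (F w.1, fderiv ℝ F w.1 (w.1 - w.2.1)) = (0 : ℝ × ℝ)} ∩
            {w | ((k : ℝ) + 1)⁻¹ < w.2.2}) := hΦD.dimH_image_le hD inter_subset_right
        _ ≤ _ := le_trans (dimH_mono inter_subset_left) hdimS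
    haveI : (volume : Measure (EuclideanSpace ℝ (Fin n) × EuclideanSpace ℝ (Fin n))).IsAddHaarMeasure := by
      rw [Measure.volume_eq_prod]; exact Measure.prod.instIsAddHaarMeasure _ _
    refine haar_null_of_dimH_lt volume (lt_of_le_of_lt hdimN₂ ?_)
    rw [Module.finrank_prod, finrank_euclideanSpace_fin]
    exact_mod_cast (by omega : 2 * n - 1 < n + n)
  -- main subset argument
  refine measure_mono_null ?_ (measure_union_null hN₁0 hN₂0)
  intro q hq
  by_contra hqn
  have hx1 : q.1 ∉ frontier A := fun h => hqn (Or.inl (Or.inl ⟨h, mem_univ _⟩))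
  have hx2 : q.2 ∉ frontier A := fun h => hqn (Or.inl (Or.inr ⟨mem_univ _, h⟩))
  have hFx : F q.1 ≠ 0 := fun h => hx1 (by rw [hbd]; exact h)
  have hFy : F q.2 ≠ 0 := fun h => hx2 (by rw [hbd]; exact h)
  set g : ℝ → ℝ := fun s => F ((1 - s) • q.1 + s • q.2) with hgdef
  set g' : ℝ → ℝ := fun s => fderiv ℝ F ((1 - s) • q.1 + s • q.2) (q.2 - q.1) with hg'def
  have hcurve : ∀ s : ℝ, HasDerivAt (fun s : ℝ => (1 - s) • q.1 + s • q.2) (q.2 - q.1) s := by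
    intro s
    have h1 : HasDerivAt (fun s : ℝ => q.1 + s • (q.2 - q.1)) (q.2 - q.1) s := by
      simpa using ((hasDerivAt_id s).smul_const (q.2 - q.1)).const_add q.1
    have h2 : (fun s : ℝ => (1 - s) • q.1 + s • q.2) = fun s : ℝ => q.1 + s • (q.2 - q.1) :=
      funext fun s => seg_eq _ _ _
    rw [h2]; exact h1
  have hgD : ∀ s : ℝ, HasDerivAt g (g' s) s := by
    intro s
    have := (hFd ((1 - s) • q.1 + s • q.2)).hasFDerivAt.comp_hasDerivAt s (hcurve s)
    simpa [hgdef, hg'def, Function.comp_def] using this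
  have he0 : g 0 = F q.1 := by rw [hgdef]; norm_num
  have he1 : g 1 = F q.2 := by rw [hgdef]; norm_num
  have hg0 : g 0 ≠ 0 := by rw [he0]; exact hFx
  have hg1 : g 1 ≠ 0 := by rw [he1]; exact hFy
  have hregz : ∀ s ∈ Ioo (0:ℝ) 1, g s = 0 → g' s ≠ 0 := by
    intro s hs hzero hder
    exact hqn (Or.inr ⟨s, hs, hzero, hder⟩)
  have hfin := zeros_finite hgD hg0 hg1 hregz
  have hpar := parity_core _ g g' hgD 0 1 one_pos hg0 hg1 hregz rfl
  rw [he0, he1] at hpar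
  have hsetEq : {s : ℝ | s ∈ Ioo (0:ℝ) 1 ∧ (1 - s) • q.1 + s • q.2 ∈ frontier A} =
      {s : ℝ | s ∈ Ioo (0:ℝ) 1 ∧ g s = 0} := by
    ext t
    rw [mem_setOf_eq, mem_setOf_eq, hbd]
    rfl
  have hT : q ∈ (A ×ˢ Aᶜ) ∪ (Aᶜ ×ˢ A) ↔ F q.1 * F q.2 < 0 := by
    rw [mem_union, mem_prod, mem_prod, mem_compl_iff, mem_compl_iff, hAF]
    simp only [mem_setOf_eq]
    rw [mul_neg_iff]
    constructor
    · rintro (⟨h1, h2⟩ | ⟨h1, h2⟩)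
      · exact Or.inr ⟨h1, (not_lt.1 h2).lt_of_ne (Ne.symm hFy)⟩
      · exact Or.inl ⟨(not_lt.1 h1).lt_of_ne (Ne.symm hFx), h2⟩
    · rintro (⟨h1, h2⟩ | ⟨h1, h2⟩)
      · exact Or.inr ⟨not_lt.2 h1.le, h2⟩
      · exact Or.inl ⟨h1, not_lt.2 h2.le⟩
  have hX : q ∈ {q : EuclideanSpace ℝ (Fin n) × EuclideanSpace ℝ (Fin n) |
      {s : ℝ | s ∈ Ioo (0 : ℝ) 1 ∧ (1 - s) • q.1 + s • q.2 ∈ frontier A}.Finite ∧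
      Odd {s : ℝ | s ∈ Ioo (0 : ℝ) 1 ∧ (1 - s) • q.1 + s • q.2 ∈ frontier A}.ncard} ↔
      F q.1 * F q.2 < 0 := by
    rw [mem_setOf_eq, hsetEq]
    constructor
    · rintro ⟨-, hodd⟩
      exact hpar.1 hodd
    · intro h
      exact ⟨hfin, hpar.2 h⟩
  rw [Set.mem_symmDiff] at hq
  rcases hq with ⟨hmem, hnot⟩ | ⟨hmem, hnot⟩
  · exact hnot (hT.2 (hX.1 hmem))
  · exact hnot (hX.2 (hT.1 hmem))
end

section
/- Let C be a compact C¹ curve in ℝ^n (n > 2) and Ω an open bounded set with C ⊆ Ω. Then 𝒟 = 𝒟_odd ∪ 𝒟_even ∪ 𝒟_∂ ∪ 𝒟_tan is a partition of 𝒟 = ℝ^n × S^{n-1} × ℝ⁺ into pairwise disjoint sets, where in particular every disc not tangent to C and with boundary disjoint from C meets C in a finite number of points. -/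
open MeasureTheory Set

/-- The ambient set of discs: center `p`, unit normal `u`, radius `r > 0`. -/
def discSet (n : ℕ) :
    Set (EuclideanSpace ℝ (Fin n) × EuclideanSpace ℝ (Fin n) × ℝ) :=
  {x | ‖x.2.1‖ = 1 ∧ 0 < x.2.2}

/-- The (relatively open) disc `D(p,u,r)` determined by `x = (p,u,r)`. -/
def openDisc (n : ℕ) (x : EuclideanSpace ℝ (Fin n) × EuclideanSpace ℝ (Fin n) × ℝ) :
    Set (EuclideanSpace ℝ (Fin n)) :=
  {y | (inner ℝ (y - x.1) x.2.1 : ℝ) = 0 ∧ ‖y - x.1‖ < x.2.2}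

/-- The boundary sphere `∂D(p,u,r)` of the disc determined by `x = (p,u,r)`. -/
def bdryDisc (n : ℕ) (x : EuclideanSpace ℝ (Fin n) × EuclideanSpace ℝ (Fin n) × ℝ) :
    Set (EuclideanSpace ℝ (Fin n)) :=
  {y | (inner ℝ (y - x.1) x.2.1 : ℝ) = 0 ∧ ‖y - x.1‖ = x.2.2}

/-- Discs whose closure contains a point of the curve where the tangent is
orthogonal to the normal of the disc. -/
def tanSet (n : ℕ) (γ : ℝ → EuclideanSpace ℝ (Fin n)) :
    Set (EuclideanSpace ℝ (Fin n) × EuclideanSpace ℝ (Fin n) × ℝ) :=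
  {x ∈ discSet n | ∃ s ∈ Icc (0 : ℝ) 1,
    (inner ℝ (γ s - x.1) x.2.1 : ℝ) = 0 ∧ ‖γ s - x.1‖ ≤ x.2.2 ∧
    (inner ℝ (deriv γ s) x.2.1 : ℝ) = 0}

/-- Non-tangent discs whose boundary sphere meets the curve. -/
def bdrySet (n : ℕ) (γ : ℝ → EuclideanSpace ℝ (Fin n)) :
    Set (EuclideanSpace ℝ (Fin n) × EuclideanSpace ℝ (Fin n) × ℝ) :=
  {x ∈ discSet n \ tanSet n γ | (bdryDisc n x ∩ γ '' Icc 0 1).Nonempty}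

/-- Non-tangent, non-boundary-touching discs meeting the curve an odd number of times. -/
def oddSet (n : ℕ) (γ : ℝ → EuclideanSpace ℝ (Fin n)) :
    Set (EuclideanSpace ℝ (Fin n) × EuclideanSpace ℝ (Fin n) × ℝ) :=
  {x ∈ discSet n \ (tanSet n γ ∪ bdrySet n γ) |
    (openDisc n x ∩ γ '' Icc 0 1).Finite ∧ Odd (openDisc n x ∩ γ '' Icc 0 1).ncard}

/-- Non-tangent, non-boundary-touching discs meeting the curve an even number of times. -/
def evenSet (n : ℕ) (γ : ℝ → EuclideanSpace ℝ (Fin n)) :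
    Set (EuclideanSpace ℝ (Fin n) × EuclideanSpace ℝ (Fin n) × ℝ) :=
  {x ∈ discSet n \ (tanSet n γ ∪ bdrySet n γ) |
    (openDisc n x ∩ γ '' Icc 0 1).Finite ∧ Even (openDisc n x ∩ γ '' Icc 0 1).ncard}

theorem IsCompact.finite_zeros_of_hasDerivAt {𝕜 F : Type*} [NontriviallyNormedField 𝕜]
    [NormedAddCommGroup F] [NormedSpace 𝕜 F] {f : 𝕜 → F} {K : Set 𝕜} (hK : IsCompact K)
    (hf : ContinuousOn f K) (hf' : ∀ x ∈ K, f x = 0 → ∃ f' ≠ 0, HasDerivAt f f' x) :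
    {x ∈ K | f x = 0}.Finite := by
  refine (hK.of_isClosed_subset (hf.preimage_isClosed_of_isClosed hK.isClosed
    isClosed_singleton) fun x hx => hx.1).finite (isDiscrete_iff_nhdsNE.2 ?_)
  rintro x ⟨hxK, hx⟩
  obtain ⟨f', hf'0, hderiv⟩ := hf' x hxK hx
  rw [Filter.inf_principal_eq_bot]
  filter_upwards [hderiv.eventually_ne (c := 0) hf'0] with y hy hyzero using hy hyzero.2

theorem finite_openDisc_inter_image {n : ℕ} {γ : ℝ → EuclideanSpace ℝ (Fin n)}
    (hγ : Differentiable ℝ γ)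
    {x : EuclideanSpace ℝ (Fin n) × EuclideanSpace ℝ (Fin n) × ℝ}
    (hx : x ∈ discSet n) (htan : x ∉ tanSet n γ) :
    (openDisc n x ∩ γ '' Icc 0 1).Finite := by
  obtain ⟨p, u, r⟩ := x
  have hγc : Continuous γ := hγ.continuous
  have hdist : Continuous fun s => ‖γ s - p‖ := by fun_prop
  have hK : IsCompact {s ∈ Icc (0 : ℝ) 1 | ‖γ s - p‖ ≤ r} :=
    isCompact_Icc.of_isClosed_subset
      (isClosed_Icc.inter (isClosed_le hdist continuous_const)) fun s hs => hs.1
  -- non-tangency makes the zeros of the height above the disc's plane nondegenerate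
  have hzeros := hK.finite_zeros_of_hasDerivAt (f := fun t => (inner ℝ (γ t - p) u : ℝ))
    (by fun_prop) fun s hs hzero =>
      ⟨_, fun h' => htan ⟨hx, s, hs.1, hzero, hs.2, h'⟩,
        by simpa using ((hγ s).hasDerivAt.sub_const p).inner ℝ (hasDerivAt_const s u)⟩
  refine (hzeros.image γ).subset ?_
  rintro _ ⟨hy, s, hs, rfl⟩
  exact ⟨s, ⟨⟨hs, hy.2.le⟩, hy.1⟩, rfl⟩

theorem stmt19_general (n : ℕ)
    (γ : ℝ → EuclideanSpace ℝ (Fin n))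
    (hγ : ContDiff ℝ 1 γ) :
    (oddSet n γ ∩ evenSet n γ = ∅ ∧
     oddSet n γ ∩ bdrySet n γ = ∅ ∧
     oddSet n γ ∩ tanSet n γ = ∅ ∧
     evenSet n γ ∩ bdrySet n γ = ∅ ∧
     evenSet n γ ∩ tanSet n γ = ∅ ∧
     bdrySet n γ ∩ tanSet n γ = ∅) ∧
    oddSet n γ ∪ evenSet n γ ∪ bdrySet n γ ∪ tanSet n γ = discSet n := by
  refine ⟨⟨?_, ?_, ?_, ?_, ?_, ?_⟩, ?_⟩
  · exact eq_empty_of_forall_notMem fun x ⟨ho, he⟩ => Nat.not_even_iff_odd.2 ho.2.2 he.2.2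
  · exact eq_empty_of_forall_notMem fun x ⟨ho, hb⟩ => ho.1.2 (.inr hb)
  · exact eq_empty_of_forall_notMem fun x ⟨ho, ht⟩ => ho.1.2 (.inl ht)
  · exact eq_empty_of_forall_notMem fun x ⟨he, hb⟩ => he.1.2 (.inr hb)
  · exact eq_empty_of_forall_notMem fun x ⟨he, ht⟩ => he.1.2 (.inl ht)
  · exact eq_empty_of_forall_notMem fun x ⟨hb, ht⟩ => hb.1.2 ht
  refine Subset.antisymm (union_subset (union_subset (union_subset
    (fun x h => h.1.1) fun x h => h.1.1) fun x h => h.1.1) fun x h => h.1) fun x hx => ?_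
  by_cases ht : x ∈ tanSet n γ
  · exact .inr ht
  by_cases hb : x ∈ bdrySet n γ
  · exact .inl (.inr hb)
  have hfin := finite_openDisc_inter_image (hγ.differentiable one_ne_zero) hx ht
  rcases Nat.even_or_odd (openDisc n x ∩ γ '' Icc 0 1).ncard with heven | hodd
  · exact .inl (.inl (.inr ⟨⟨hx, not_or.2 ⟨ht, hb⟩⟩, hfin, heven⟩))
  · exact .inl (.inl (.inl ⟨⟨hx, not_or.2 ⟨ht, hb⟩⟩, hfin, hodd⟩))

theorem stmt19 (n : ℕ) (hn : 2 < n)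
    (γ : ℝ → EuclideanSpace ℝ (Fin n))
    (hγ : ContDiff ℝ 1 γ)
    (hinj : Set.InjOn γ (Set.Icc 0 1))
    (hreg : ∀ s ∈ Set.Icc (0 : ℝ) 1, deriv γ s ≠ 0)
    (Ω : Set (EuclideanSpace ℝ (Fin n)))
    (hΩo : IsOpen Ω) (hΩb : Bornology.IsBounded Ω)
    (hCΩ : γ '' Set.Icc 0 1 ⊆ Ω) :
    (oddSet n γ ∩ evenSet n γ = ∅ ∧
     oddSet n γ ∩ bdrySet n γ = ∅ ∧
     oddSet n γ ∩ tanSet n γ = ∅ ∧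
     evenSet n γ ∩ bdrySet n γ = ∅ ∧
     evenSet n γ ∩ tanSet n γ = ∅ ∧
     bdrySet n γ ∩ tanSet n γ = ∅) ∧
    oddSet n γ ∪ evenSet n γ ∪ bdrySet n γ ∪ tanSet n γ = discSet n :=
  stmt19_general n γ hγ
end
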